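/- arXiv:2105.09152 — 3 statements merged into one kernel-verified Lean document; each statement's English description precedes it below -/
import Mathlib

section
/- Let A = [[A_uu, A_ūuᵀ],[A_ūu, A_ūū]] be symmetric positive definite and B_pu ∈ ℝ^{k×n} of full row rank. Define 𝒫 = I − A_uu⁻¹B_puᵀ(B_pu A_uu⁻¹ B_puᵀ)⁻¹B_pu and Āᵈ = A_ūū − A_ūu 𝒫 A_uu⁻¹ A_ūuᵀ. Then Āᵈ is symmetric positive definite. -/
/-!
With `W = B A⁻¹ Bᴴ`, the matrix `D - C 𝒫 A⁻¹ Cᴴ` splits as the Schur complement `D - C A⁻¹ Cᴴ`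
plus `(C A⁻¹ Bᴴ) W⁻¹ (C A⁻¹ Bᴴ)ᴴ`. The Schur complement of a positive definite block matrix is
positive definite, and the second term is positive semidefinite because `W`, hence `W⁻¹`, is.
-/

open Matrix

open scoped ComplexOrder

namespace Matrix.PosDef

variable {𝕜 m n k : Type*} [RCLike 𝕜]

lemma of_fromBlocks_left {A : Matrix m m 𝕜} {B : Matrix m n 𝕜} {C : Matrix n m 𝕜}
    {D : Matrix n n 𝕜} (hM : (fromBlocks A B C D).PosDef) : A.PosDef :=
  hM.submatrix Sum.inl_injective

variable [Fintype m] [Fintype n] [DecidableEq m] [DecidableEq n]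

lemma schur_of_fromBlocks {A : Matrix m m 𝕜} {B : Matrix m n 𝕜} {D : Matrix n n 𝕜}
    (hM : (fromBlocks A B Bᴴ D).PosDef) : (D - Bᴴ * A⁻¹ * B).PosDef := by
  have hA := hM.of_fromBlocks_left
  have := hA.isUnit.invertible
  have hdet : IsUnit (A.det * (D - Bᴴ * A⁻¹ * B).det) := by
    simpa [det_fromBlocks₁₁] using (isUnit_iff_isUnit_det _).mp hM.isUnit
  rw [((fromBlocks₁₁ B D hA).mp hM.posSemidef).posDef_iff_isUnit, isUnit_iff_isUnit_det]
  exact isUnit_of_mul_isUnit_right hdet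

lemma constrained_schur_of_fromBlocks [Fintype k] [DecidableEq k] {A : Matrix n n 𝕜}
    {C : Matrix m n 𝕜} {D : Matrix m m 𝕜} (hM : (fromBlocks A Cᴴ C D).PosDef)
    (B : Matrix k n 𝕜) :
    (D - C * (1 - A⁻¹ * Bᴴ * (B * A⁻¹ * Bᴴ)⁻¹ * B) * A⁻¹ * Cᴴ).PosDef := by
  have hAinv := hM.of_fromBlocks_left.inv
  have hschur : (D - C * A⁻¹ * Cᴴ).PosDef := by
    simpa using schur_of_fromBlocks (B := Cᴴ) (by simpa using hM)
  have hcorr : (C * A⁻¹ * Bᴴ * (B * A⁻¹ * Bᴴ)⁻¹ * (C * A⁻¹ * Bᴴ)ᴴ).PosSemidef :=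
    (hAinv.posSemidef.mul_mul_conjTranspose_same B).inv.mul_mul_conjTranspose_same _
  have hsplit : D - C * (1 - A⁻¹ * Bᴴ * (B * A⁻¹ * Bᴴ)⁻¹ * B) * A⁻¹ * Cᴴ
      = (D - C * A⁻¹ * Cᴴ) + C * A⁻¹ * Bᴴ * (B * A⁻¹ * Bᴴ)⁻¹ * (C * A⁻¹ * Bᴴ)ᴴ := by
    simp only [conjTranspose_mul, conjTranspose_conjTranspose, hAinv.isHermitian.eq,
      Matrix.mul_sub, Matrix.sub_mul, Matrix.mul_one, Matrix.mul_assoc]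
    abel
  rw [hsplit]
  exact hschur.add_posSemidef hcorr

end Matrix.PosDef

theorem stmt_9_general {n m k : ℕ}
    (Auu : Matrix (Fin n) (Fin n) ℝ) (Abu : Matrix (Fin m) (Fin n) ℝ)
    (Abb : Matrix (Fin m) (Fin m) ℝ) (Bpu : Matrix (Fin k) (Fin n) ℝ)
    (hA : (Matrix.fromBlocks Auu Abuᵀ Abu Abb).PosDef)
    (P : Matrix (Fin n) (Fin n) ℝ)
    (hP : P = 1 - Auu⁻¹ * Bpuᵀ * (Bpu * Auu⁻¹ * Bpuᵀ)⁻¹ * Bpu) :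
    (Abb - Abu * P * Auu⁻¹ * Abuᵀ).PosDef := by
  simp only [hP, ← conjTranspose_eq_transpose_of_trivial] at hA ⊢
  exact hA.constrained_schur_of_fromBlocks Bpu

theorem stmt_9 {n m k : ℕ}
    (Auu : Matrix (Fin n) (Fin n) ℝ) (Abu : Matrix (Fin m) (Fin n) ℝ)
    (Abb : Matrix (Fin m) (Fin m) ℝ) (Bpu : Matrix (Fin k) (Fin n) ℝ)
    (hA : (Matrix.fromBlocks Auu Abuᵀ Abu Abb).PosDef)
    (hB : Bpu.rank = k)
    (P : Matrix (Fin n) (Fin n) ℝ)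
    (hP : P = 1 - Auu⁻¹ * Bpuᵀ * (Bpu * Auu⁻¹ * Bpuᵀ)⁻¹ * Bpu) :
    (Abb - Abu * P * Auu⁻¹ * Abuᵀ).PosDef :=
  stmt_9_general Auu Abu Abb Bpu hA P hP
end

section
/- The matrix A_P = [[A_uu, 𝒫ᵀA_ūuᵀ],[A_ūu𝒫, A_ūū]] is symmetric positive definite, given that A is SPD and B_pu is full row rank. -/
/-!
Take the Schur complement of `A_P` with respect to the positive definite block `A_uu`. Writing
`M = B A_uu⁻¹ Bᵀ`, the identity `M⁻¹ M M⁻¹ = M⁻¹` and the symmetry of `A_uu⁻¹` give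
`𝒫 A_uu⁻¹ 𝒫ᵀ = A_uu⁻¹ - (A_uu⁻¹ Bᵀ) M⁻¹ (A_uu⁻¹ Bᵀ)ᵀ`, so the Schur complement of `A_P` is
the Schur complement of `A` plus the positive semidefinite matrix
`(A_ūu A_uu⁻¹ Bᵀ) M⁻¹ (A_ūu A_uu⁻¹ Bᵀ)ᵀ`, hence positive definite.
-/

open Matrix

namespace Matrix

variable {m n k R : Type*} [Fintype m] [Fintype n] [Fintype k] [DecidableEq n] [DecidableEq k]

section CommRing

variable [CommRing R]

theorem nonsing_inv_mul_mul_nonsing_inv (M : Matrix n n R) : M⁻¹ * M * M⁻¹ = M⁻¹ := by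
  by_cases h : IsUnit M.det
  · rw [nonsing_inv_mul _ h, Matrix.one_mul]
  · rw [nonsing_inv_apply_not_isUnit _ h, Matrix.mul_zero]

noncomputable def constraintProjector (A : Matrix n n R) (B : Matrix k n R) : Matrix n n R :=
  1 - A⁻¹ * Bᵀ * (B * A⁻¹ * Bᵀ)⁻¹ * B

theorem inv_sub_constraintProjector_mul_inv_mul_transpose {A : Matrix n n R} (hA : Aᵀ = A)
    (B : Matrix k n R) :
    A⁻¹ - constraintProjector A B * A⁻¹ * (constraintProjector A B)ᵀ =
      A⁻¹ * Bᵀ * (B * A⁻¹ * Bᵀ)⁻¹ * (A⁻¹ * Bᵀ)ᵀ := by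
  have hG : A⁻¹ᵀ = A⁻¹ := by rw [transpose_nonsing_inv, hA]
  have hN : (B * A⁻¹ * Bᵀ)⁻¹ᵀ = (B * A⁻¹ * Bᵀ)⁻¹ := by
    rw [transpose_nonsing_inv, transpose_mul, transpose_mul, transpose_transpose, hG,
      Matrix.mul_assoc]
  have hNMN := nonsing_inv_mul_mul_nonsing_inv (B * A⁻¹ * Bᵀ)
  unfold constraintProjector
  generalize (B * A⁻¹ * Bᵀ)⁻¹ = N at *
  generalize A⁻¹ = G at *
  have hNMN' (Y : Matrix k n R) : N * (B * (G * (Bᵀ * (N * Y)))) = N * Y := by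
    simpa only [Matrix.mul_assoc] using congrArg (· * Y) hNMN
  simp only [transpose_sub, transpose_one, transpose_mul, transpose_transpose, hG, hN,
    Matrix.sub_mul, Matrix.mul_sub, Matrix.one_mul, Matrix.mul_one, Matrix.mul_assoc, hNMN']
  abel

section StarRing

variable [PartialOrder R] [StarRing R]

theorem PosSemidef.inv_sub_constraintProjector_mul_inv_mul_transpose [TrivialStar R]
    {A : Matrix n n R} (hA : A.PosSemidef) (B : Matrix k n R) :
    (A⁻¹ - constraintProjector A B * A⁻¹ * (constraintProjector A B)ᵀ).PosSemidef := by
  have hAT : Aᵀ = A := by rw [← conjTranspose_eq_transpose_of_trivial A, hA.1]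
  have hM : (B * A⁻¹ * Bᵀ).PosSemidef := by
    simpa only [conjTranspose_eq_transpose_of_trivial] using hA.inv.mul_mul_conjTranspose_same B
  rw [Matrix.inv_sub_constraintProjector_mul_inv_mul_transpose hAT,
    ← conjTranspose_eq_transpose_of_trivial (A⁻¹ * Bᵀ)]
  exact hM.inv.mul_mul_conjTranspose_same _

variable [StarOrderedRing R]

theorem PosDef.fromBlocks₁₁_posDef_iff {A : Matrix n n R} (hA : A.PosDef) [Invertible A]
    (B : Matrix n m R) (D : Matrix m m R) :
    (fromBlocks A B Bᴴ D).PosDef ↔ (D - Bᴴ * A⁻¹ * B).PosDef := by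
  rw [posDef_iff_dotProduct_mulVec, posDef_iff_dotProduct_mulVec,
    IsHermitian.fromBlocks₁₁ _ _ hA.1]
  refine and_congr_right fun _ => ⟨fun h y hy => ?_, fun h x hx => ?_⟩
  · have key := @h (-((A⁻¹ * B) *ᵥ y) ⊕ᵥ y)
      (fun hc => hy (funext fun i => congrFun hc (Sum.inr i)))
    rwa [dotProduct_mulVec, schur_complement_eq₁₁ B D _ _ hA.1, neg_add_cancel, dotProduct_zero,
      zero_add, ← dotProduct_mulVec] at key
  · rw [dotProduct_mulVec, ← Sum.elim_comp_inl_inr x, schur_complement_eq₁₁ B D _ _ hA.1]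
    by_cases hy : x ∘ Sum.inr = 0
    · have hxl : x ∘ Sum.inl ≠ 0 := fun hc => hx (funext fun i =>
        match i with | .inl j => congrFun hc j | .inr j => congrFun hy j)
      simpa only [hy, mulVec_zero, add_zero, star_zero, zero_vecMul, zero_dotProduct,
        ← dotProduct_mulVec] using hA.dotProduct_mulVec_pos hxl
    · rw [← dotProduct_mulVec, ← dotProduct_mulVec (star (x ∘ Sum.inr))]
      exact add_pos_of_nonneg_of_pos (hA.posSemidef.dotProduct_mulVec_nonneg _) (h hy)

theorem PosDef.fromBlocks_of_posSemidef_sub {A : Matrix n n R} (hA : A.PosDef) [Invertible A]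
    {B B' : Matrix n m R} {D : Matrix m m R} (h : (fromBlocks A B Bᴴ D).PosDef)
    (hB : (Bᴴ * A⁻¹ * B - B'ᴴ * A⁻¹ * B').PosSemidef) :
    (fromBlocks A B' B'ᴴ D).PosDef := by
  rw [hA.fromBlocks₁₁_posDef_iff] at h ⊢
  simpa only [sub_add_sub_cancel] using h.add_posSemidef hB

end StarRing

end CommRing

end Matrix

theorem stmt_16_general {n m k : ℕ}
    (Auu : Matrix (Fin n) (Fin n) ℝ) (Abu : Matrix (Fin m) (Fin n) ℝ)
    (Abb : Matrix (Fin m) (Fin m) ℝ) (Bpu : Matrix (Fin k) (Fin n) ℝ)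
    (hA : (Matrix.fromBlocks Auu Abuᵀ Abu Abb).PosDef)
    (P : Matrix (Fin n) (Fin n) ℝ)
    (hP : P = 1 - Auu⁻¹ * Bpuᵀ * (Bpu * Auu⁻¹ * Bpuᵀ)⁻¹ * Bpu) :
    (Matrix.fromBlocks Auu (Pᵀ * Abuᵀ) (Abu * P) Abb).PosDef := by
  obtain rfl : P = constraintProjector Auu Bpu := hP
  have hAuu : Auu.PosDef := hA.submatrix Sum.inl_injective
  have := hAuu.isUnit.invertible
  have hAbu : (Abuᵀ)ᴴ = Abu := by simp [conjTranspose_eq_transpose_of_trivial]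
  have hAbuP : ((constraintProjector Auu Bpu)ᵀ * Abuᵀ)ᴴ = Abu * constraintProjector Auu Bpu := by
    simp [conjTranspose_eq_transpose_of_trivial]
  have hA' : (fromBlocks Auu Abuᵀ (Abuᵀ)ᴴ Abb).PosDef := by rwa [hAbu]
  rw [← hAbuP]
  refine hAuu.fromBlocks_of_posSemidef_sub hA' ?_
  convert (hAuu.posSemidef.inv_sub_constraintProjector_mul_inv_mul_transpose Bpu
    ).mul_mul_conjTranspose_same Abu using 1
  simp only [hAbu, hAbuP, conjTranspose_eq_transpose_of_trivial, Matrix.mul_sub, Matrix.sub_mul,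
    Matrix.mul_assoc]

theorem stmt_16 {n m k : ℕ}
    (Auu : Matrix (Fin n) (Fin n) ℝ) (Abu : Matrix (Fin m) (Fin n) ℝ)
    (Abb : Matrix (Fin m) (Fin m) ℝ) (Bpu : Matrix (Fin k) (Fin n) ℝ)
    (hA : (Matrix.fromBlocks Auu Abuᵀ Abu Abb).PosDef)
    (hB : Bpu.rank = k)
    (P : Matrix (Fin n) (Fin n) ℝ)
    (hP : P = 1 - Auu⁻¹ * Bpuᵀ * (Bpu * Auu⁻¹ * Bpuᵀ)⁻¹ * Bpu) :
    (Matrix.fromBlocks Auu (Pᵀ * Abuᵀ) (Abu * P) Abb).PosDef :=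
  stmt_16_general Auu Abu Abb Bpu hA P hP
end

section
/- With ℛ = blockdiag(𝒫, I) and A_P as above, for every w = (w₁, w₂): ⟨A_P ℛw, ℛw⟩ = ⟨A_P w, w⟩ − ⟨S_pp⁻¹ B_pu w₁, B_pu w₁⟩ ≤ ⟨A_P w, w⟩, where S_pp = B_pu A_uu⁻¹ B_puᵀ. -/
/-! With `S = B A⁻¹ Bᵀ` and `Q = A⁻¹ Bᵀ S⁻¹ B`, the matrix `𝒫 = 1 - Q` is the `A`-orthogonal
projection onto `ker B`: it is idempotent and `𝒫ᵀ A 𝒫 = A - Bᵀ S⁻¹ B`. Since `𝒫` is idempotent,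
replacing `w` by `ℛ w` does not change the off-diagonal terms of the quadratic form of `A_P`,
so the two forms differ only in the `(1,1)` block, by `⟨Bᵀ S⁻¹ B w₁, w₁⟩ = ⟨S⁻¹ B w₁, B w₁⟩`.
This is nonnegative because `S`, a full-row-rank congruence of `A⁻¹`, is positive definite. -/

open Matrix

namespace Matrix

section Quadratic

variable {ι κ R : Type*} [Fintype ι] [Fintype κ] [CommRing R]

theorem dotProduct_transpose_mul_mul_mulVec (M : Matrix κ κ R) (N : Matrix κ ι R) (x : ι → R) :
    x ⬝ᵥ (Nᵀ * M * N) *ᵥ x = (N *ᵥ x) ⬝ᵥ M *ᵥ (N *ᵥ x) := by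
  rw [← mulVec_mulVec, ← mulVec_mulVec, dotProduct_mulVec, vecMul_transpose]

theorem sumElim_dotProduct_fromBlocks_mulVec (A : Matrix ι ι R) (B : Matrix ι κ R)
    (C : Matrix κ ι R) (D : Matrix κ κ R) (x : ι → R) (y : κ → R) :
    Sum.elim x y ⬝ᵥ fromBlocks A B C D *ᵥ Sum.elim x y =
      x ⬝ᵥ A *ᵥ x + x ⬝ᵥ B *ᵥ y + y ⬝ᵥ C *ᵥ x + y ⬝ᵥ D *ᵥ y := by
  rw [fromBlocks_mulVec, sumElim_dotProduct_sumElim, Sum.elim_comp_inl, Sum.elim_comp_inr,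
    dotProduct_add, dotProduct_add]
  ring

theorem dotProduct_fromBlocks_mulVec_of_isIdempotentElem [DecidableEq κ] {P : Matrix ι ι R}
    (hP : IsIdempotentElem P) (A : Matrix ι ι R) (B : Matrix ι κ R) (C : Matrix κ ι R)
    (D : Matrix κ κ R) (x : ι → R) (y : κ → R) :
    (fromBlocks P 0 0 1 *ᵥ Sum.elim x y) ⬝ᵥ
        fromBlocks A (Pᵀ * B) (C * P) D *ᵥ (fromBlocks P 0 0 1 *ᵥ Sum.elim x y) =
      Sum.elim x y ⬝ᵥ fromBlocks A (Pᵀ * B) (C * P) D *ᵥ Sum.elim x y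
        - x ⬝ᵥ (A - Pᵀ * A * P) *ᵥ x := by
  have hPt : IsIdempotentElem Pᵀ := by
    rw [IsIdempotentElem, ← transpose_mul, hP.eq]
  have hRw : fromBlocks P 0 0 1 *ᵥ Sum.elim x y = Sum.elim (P *ᵥ x) y := by
    simp [fromBlocks_mulVec]
  have hB : (P *ᵥ x) ⬝ᵥ (Pᵀ * B) *ᵥ y = x ⬝ᵥ (Pᵀ * B) *ᵥ y := by
    rw [dotProduct_mulVec, vecMul_mulVec, ← Matrix.mul_assoc, hPt.eq, ← dotProduct_mulVec]
  have hC : y ⬝ᵥ (C * P) *ᵥ (P *ᵥ x) = y ⬝ᵥ (C * P) *ᵥ x := by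
    rw [mulVec_mulVec, Matrix.mul_assoc, hP.eq]
  rw [hRw, sumElim_dotProduct_fromBlocks_mulVec, sumElim_dotProduct_fromBlocks_mulVec, hB, hC,
    ← dotProduct_transpose_mul_mul_mulVec, sub_mulVec, dotProduct_sub]
  ring

end Quadratic

section ObliqueProjection

variable {ι κ K : Type*} [Fintype ι] [Fintype κ] [DecidableEq κ] [Field K]

theorem isIdempotentElem_mul_inv_mul {X : Matrix ι κ K} {Y : Matrix κ ι K}
    (h : IsUnit (Y * X).det) : IsIdempotentElem (X * (Y * X)⁻¹ * Y) := by
  rw [IsIdempotentElem]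
  calc X * (Y * X)⁻¹ * Y * (X * (Y * X)⁻¹ * Y)
      = X * ((Y * X)⁻¹ * ((Y * X) * ((Y * X)⁻¹ * Y))) := by simp only [Matrix.mul_assoc]
    _ = X * (Y * X)⁻¹ * Y := by
      rw [mul_nonsing_inv_cancel_left (A := Y * X) Y h, Matrix.mul_assoc]

variable [DecidableEq ι] {A : Matrix ι ι K} {B : Matrix κ ι K}

theorem isIdempotentElem_one_sub_inv_mul_transpose_mul (hS : IsUnit (B * A⁻¹ * Bᵀ).det) :
    IsIdempotentElem (1 - A⁻¹ * Bᵀ * (B * A⁻¹ * Bᵀ)⁻¹ * B) := by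
  rw [Matrix.mul_assoc B] at hS ⊢
  exact (isIdempotentElem_mul_inv_mul hS).one_sub

theorem transpose_mul_mul_one_sub_inv_mul_transpose_mul (hA : A.IsSymm) (hAdet : IsUnit A.det)
    (hS : IsUnit (B * A⁻¹ * Bᵀ).det) :
    (1 - A⁻¹ * Bᵀ * (B * A⁻¹ * Bᵀ)⁻¹ * B)ᵀ * A * (1 - A⁻¹ * Bᵀ * (B * A⁻¹ * Bᵀ)⁻¹ * B) =
      A - Bᵀ * (B * A⁻¹ * Bᵀ)⁻¹ * B := by
  have hQQ := (IsIdempotentElem.one_sub_iff.mp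
    (isIdempotentElem_one_sub_inv_mul_transpose_mul hS)).eq
  set S := B * A⁻¹ * Bᵀ
  set Q := A⁻¹ * Bᵀ * S⁻¹ * B
  have hS_symm : Sᵀ = S := by
    simp only [S, transpose_mul, transpose_transpose, transpose_nonsing_inv, hA.eq,
      Matrix.mul_assoc]
  have hAQ : A * Q = Bᵀ * S⁻¹ * B := by
    simp only [Q, Matrix.mul_assoc, mul_nonsing_inv_cancel_left _ _ hAdet]
  -- `Qᵀ A = (A Q)ᵀ`, and `A Q = Bᵀ S⁻¹ B` is symmetric.
  have hQtA : Qᵀ * A = A * Q := by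
    conv_lhs => rw [← hA.eq]
    rw [← transpose_mul, hAQ]
    simp only [transpose_mul, transpose_transpose, transpose_nonsing_inv, hS_symm,
      Matrix.mul_assoc]
  rw [transpose_sub, transpose_one, sub_mul, one_mul, sub_mul, mul_sub, mul_sub, mul_one, mul_one,
    hQtA, Matrix.mul_assoc A, hQQ, ← hAQ]
  abel

end ObliqueProjection

theorem vecMul_injective_of_rank_eq_card {ι κ K : Type*} [Fintype ι] [Fintype κ] [Field K]
    {B : Matrix κ ι K} (hB : B.rank = Fintype.card κ) : Function.Injective B.vecMul := by
  rw [vecMul_injective_iff, linearIndependent_iff_card_eq_finrank_span, ← hB,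
    rank_eq_finrank_span_row, Set.finrank]

theorem PosDef.mul_inv_mul_transpose {ι κ : Type*} [Fintype ι] [Fintype κ] [DecidableEq ι]
    {A : Matrix ι ι ℝ} (hA : A.PosDef) {B : Matrix κ ι ℝ} (hB : B.rank = Fintype.card κ) :
    (B * A⁻¹ * Bᵀ).PosDef := by
  simpa using hA.inv.mul_mul_conjTranspose_same (vecMul_injective_of_rank_eq_card hB)

end Matrix

theorem stmt_17 {n m k : ℕ}
    (Auu : Matrix (Fin n) (Fin n) ℝ) (Abu : Matrix (Fin m) (Fin n) ℝ)
    (Abb : Matrix (Fin m) (Fin m) ℝ) (Bpu : Matrix (Fin k) (Fin n) ℝ)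
    (hA : (Matrix.fromBlocks Auu Abuᵀ Abu Abb).PosDef)
    (hB : Bpu.rank = k)
    (Spp : Matrix (Fin k) (Fin k) ℝ) (hSpp : Spp = Bpu * Auu⁻¹ * Bpuᵀ)
    (P : Matrix (Fin n) (Fin n) ℝ)
    (hP : P = 1 - Auu⁻¹ * Bpuᵀ * Spp⁻¹ * Bpu)
    (AP : Matrix (Fin n ⊕ Fin m) (Fin n ⊕ Fin m) ℝ)
    (hAP : AP = Matrix.fromBlocks Auu (Pᵀ * Abuᵀ) (Abu * P) Abb)
    (R : Matrix (Fin n ⊕ Fin m) (Fin n ⊕ Fin m) ℝ)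
    (hR : R = Matrix.fromBlocks P 0 0 1)
    (w₁ : Fin n → ℝ) (w₂ : Fin m → ℝ) :
    (R.mulVec (Sum.elim w₁ w₂)) ⬝ᵥ AP.mulVec (R.mulVec (Sum.elim w₁ w₂)) =
        Sum.elim w₁ w₂ ⬝ᵥ AP.mulVec (Sum.elim w₁ w₂)
          - (Spp⁻¹.mulVec (Bpu.mulVec w₁)) ⬝ᵥ (Bpu.mulVec w₁) ∧
      (R.mulVec (Sum.elim w₁ w₂)) ⬝ᵥ AP.mulVec (R.mulVec (Sum.elim w₁ w₂)) ≤
        Sum.elim w₁ w₂ ⬝ᵥ AP.mulVec (Sum.elim w₁ w₂) := by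
  subst hSpp hP hAP hR
  have hAuu : Auu.PosDef := hA.submatrix Sum.inl_injective
  have hS : (Bpu * Auu⁻¹ * Bpuᵀ).PosDef := hAuu.mul_inv_mul_transpose (by simpa using hB)
  have hSdet : IsUnit (Bpu * Auu⁻¹ * Bpuᵀ).det := (isUnit_iff_isUnit_det _).mp hS.isUnit
  have hAdet : IsUnit Auu.det := (isUnit_iff_isUnit_det _).mp hAuu.isUnit
  rw [dotProduct_fromBlocks_mulVec_of_isIdempotentElem
      (isIdempotentElem_one_sub_inv_mul_transpose_mul hSdet),
    transpose_mul_mul_one_sub_inv_mul_transpose_mul (isHermitian_iff_isSymm.mp hAuu.isHermitian)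
      hAdet hSdet, sub_sub_cancel, dotProduct_transpose_mul_mul_mulVec,
    dotProduct_comm (Bpu *ᵥ w₁)]
  refine ⟨rfl, sub_le_self _ ?_⟩
  have hnonneg := hS.inv.posSemidef.dotProduct_mulVec_nonneg (Bpu *ᵥ w₁)
  rwa [star_trivial, dotProduct_comm] at hnonneg
end
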